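/- Telescoped mirror descent bound with decreasing step sizes for the strongly convex analysis: Let C ⊆ ℝ^p be a convex set, N a norm on ℝ^p, and Ψ : ℝ^p → ℝ a differentiable function that is 1-strongly convex with respect to N on C. Let Δ > 0, T ≥ 1, g_1, …, g_T ∈ ℝ^p with N*(g_t) ≤ G for all t, θ_1 ∈ C, and suppose for each t = 1, …, T that θ_{t+1} ∈ C attains the minimum over C of θ ↦ ⟨η_{t+1}·g_t − ∇Ψ(θ_t), θ⟩ + Ψ(θ), where η_{t+1} = 1/(Δ·(t+1)). Then for every θ* ∈ C, Σ_{t=1}^T ( ⟨g_t, θ_t − θ*⟩ − Δ·B_Ψ(θ*, θ_t) ) ≤ Δ·B_Ψ(θ*, θ_1) + (G²/(2Δ))·Σ_{t=1}^T 1/(t+1). -/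

import Mathlib

/-!
With `η = 1 / (Δ (t + 1))`, first-order optimality of `θ (t + 1)` and the three-point identity for
Bregman divergences give
`η ⟪g t, θ (t + 1) - θs⟫ ≤ B(θs, θ t) - B(θs, θ (t + 1)) - B(θ (t + 1), θ t)`,
while the dual-norm bound, AM-GM and strong convexity (`B(θ (t + 1), θ t) ≥ N(θ (t + 1) - θ t)² / 2`)
give `η ⟪g t, θ t - θ (t + 1)⟫ ≤ η² G² / 2 + B(θ (t + 1), θ t)`. Since `1 / η = Δ (t + 1)`,
subtracting `Δ B(θs, θ t)` turns the sum of the two into a telescoping difference of the potential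
`Δ t B(θs, θ t)` plus `G² / (2 Δ (t + 1))`, and the last potential is nonnegative.
-/

open scoped BigOperators
open RealInnerProductSpace

/-- The dual norm `N*(g) = sup { ⟨g, v⟩ : N(v) ≤ 1 }` of a norm `N` on `ℝ^p`. -/
noncomputable def dualNorm {p : ℕ} (N : EuclideanSpace ℝ (Fin p) → ℝ)
    (g : EuclideanSpace ℝ (Fin p)) : ℝ :=
  sSup {r : ℝ | ∃ v : EuclideanSpace ℝ (Fin p), N v ≤ 1 ∧ r = ⟪g, v⟫}

/-- Bregman divergence `B_Ψ(x, y) = Ψ(x) − Ψ(y) − ⟨∇Ψ(y), x − y⟩` where `Ψ'` is the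
gradient of `Ψ`. -/
noncomputable def breg {p : ℕ} (Ψ : EuclideanSpace ℝ (Fin p) → ℝ)
    (Ψ' : EuclideanSpace ℝ (Fin p) → EuclideanSpace ℝ (Fin p))
    (x y : EuclideanSpace ℝ (Fin p)) : ℝ :=
  Ψ x - Ψ y - ⟪Ψ' y, x - y⟫

/-- `N` is a norm on `ℝ^p`. -/
def IsNorm {p : ℕ} (N : EuclideanSpace ℝ (Fin p) → ℝ) : Prop :=
  (∀ x y, N (x + y) ≤ N x + N y) ∧ (∀ (c : ℝ) (x : EuclideanSpace ℝ (Fin p)),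
    N (c • x) = |c| * N x) ∧ (∀ x, N x = 0 ↔ x = 0)

open Set

namespace IsNorm

variable {p : ℕ} {N : EuclideanSpace ℝ (Fin p) → ℝ}

lemma map_zero (hN : IsNorm N) : N 0 = 0 := (hN.2.2 0).2 rfl

lemma map_neg (hN : IsNorm N) (x : EuclideanSpace ℝ (Fin p)) : N (-x) = N x := by
  simpa using hN.2.1 (-1) x

lemma map_sub_comm (hN : IsNorm N) (x y : EuclideanSpace ℝ (Fin p)) : N (x - y) = N (y - x) := by
  rw [← neg_sub, hN.map_neg]

lemma nonneg (hN : IsNorm N) (x : EuclideanSpace ℝ (Fin p)) : 0 ≤ N x := by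
  have h := hN.1 x (-x)
  rw [add_neg_cancel, hN.map_zero, hN.map_neg] at h
  linarith

lemma convexOn (hN : IsNorm N) : ConvexOn ℝ univ N := by
  refine ⟨convex_univ, fun x _ y _ a b ha hb _ => ?_⟩
  calc N (a • x + b • y) ≤ N (a • x) + N (b • y) := hN.1 _ _
    _ = a • N x + b • N y := by
      rw [hN.2.1, hN.2.1, abs_of_nonneg ha, abs_of_nonneg hb, smul_eq_mul, smul_eq_mul]

lemma continuous (hN : IsNorm N) : Continuous N :=
  continuousOn_univ.mp (hN.convexOn.continuousOn isOpen_univ)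

lemma exists_pos_mul_norm_le (hN : IsNorm N) : ∃ m > 0, ∀ v, m * ‖v‖ ≤ N v := by
  rcases subsingleton_or_nontrivial (EuclideanSpace ℝ (Fin p)) with _ | _
  · exact ⟨1, one_pos, fun v => by simp [Subsingleton.elim v 0, hN.map_zero]⟩
  obtain ⟨x, hx, hmin⟩ := (isCompact_sphere (0 : EuclideanSpace ℝ (Fin p)) 1).exists_isMinOn
    (NormedSpace.sphere_nonempty.2 zero_le_one) hN.continuous.continuousOn
  have hx0 : x ≠ 0 := ne_zero_of_mem_unit_sphere ⟨x, hx⟩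
  refine ⟨N x, (hN.nonneg x).lt_of_ne' (mt (hN.2.2 x).1 hx0), fun v => ?_⟩
  rcases eq_or_ne v 0 with rfl | hv
  · simp [hN.map_zero]
  have h : N x ≤ N (‖v‖⁻¹ • v) := hmin (by simp [norm_smul, hv])
  rw [hN.2.1, abs_of_nonneg (by positivity), le_inv_mul_iff₀ (norm_pos_iff.2 hv)] at h
  linarith

-- Needed for `dualNorm` to be meaningful: `sSup` of a set unbounded above is `0`.
lemma bddAbove_inner (hN : IsNorm N) (g : EuclideanSpace ℝ (Fin p)) :
    BddAbove {r : ℝ | ∃ v : EuclideanSpace ℝ (Fin p), N v ≤ 1 ∧ r = ⟪g, v⟫} := by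
  obtain ⟨m, hm, hmN⟩ := hN.exists_pos_mul_norm_le
  refine ⟨‖g‖ / m, ?_⟩
  rintro _ ⟨v, hv, rfl⟩
  calc ⟪g, v⟫ ≤ ‖g‖ * ‖v‖ := real_inner_le_norm g v
    _ ≤ ‖g‖ * (1 / m) := by gcongr; rw [le_div_iff₀ hm]; linarith [hmN v]
    _ = ‖g‖ / m := by ring

lemma inner_le_dualNorm_mul (hN : IsNorm N) (g v : EuclideanSpace ℝ (Fin p)) :
    ⟪g, v⟫ ≤ dualNorm N g * N v := by
  rcases (hN.nonneg v).eq_or_lt with h0 | hpos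
  · simp [(hN.2.2 v).1 h0.symm, hN.map_zero]
  have hu : N ((N v)⁻¹ • v) ≤ 1 := by
    rw [hN.2.1, abs_of_pos (inv_pos.2 hpos), inv_mul_cancel₀ hpos.ne']
  have h : ⟪g, (N v)⁻¹ • v⟫ ≤ dualNorm N g := le_csSup (hN.bddAbove_inner g) ⟨_, hu, rfl⟩
  rw [real_inner_smul_right, inv_mul_le_iff₀ hpos] at h
  linarith

end IsNorm

section InnerProductSpace

variable {E : Type*} [NormedAddCommGroup E] [InnerProductSpace ℝ E] [CompleteSpace E]

lemma HasGradientAt.hasDerivAt_add_smul {Ψ : E → ℝ} {Ψ' y : E} (hΨ : HasGradientAt Ψ Ψ' y)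
    (d : E) : HasDerivAt (fun t : ℝ => Ψ (y + t • d)) ⟪Ψ', d⟫ 0 := by
  have hline : HasDerivAt (fun t : ℝ => y + t • d) d 0 := by
    simpa using ((hasDerivAt_id (0 : ℝ)).smul_const d).const_add y
  have hΨ0 : HasFDerivAt Ψ (InnerProductSpace.toDual ℝ E Ψ') (y + (0 : ℝ) • d) := by
    simpa using hΨ.hasFDerivAt
  exact hΨ0.comp_hasDerivAt (0 : ℝ) hline

lemma half_mul_sq_le_of_strongConvex {Ψ N : E → ℝ} {σ : ℝ} {x y Ψ' : E}
    (hΨ : HasGradientAt Ψ Ψ' y)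
    (hsc : ∀ α ∈ Icc (0:ℝ) 1, Ψ (α • x + (1 - α) • y) ≤
      α * Ψ x + (1 - α) * Ψ y - σ * α * (1 - α) / 2 * N (x - y) ^ 2) :
    σ / 2 * N (x - y) ^ 2 ≤ Ψ x - Ψ y - ⟪Ψ', x - y⟫ := by
  set c := σ / 2 * N (x - y) ^ 2
  -- Strong convexity says exactly that `φ` is maximal at `0` on `[0, 1]`; hence `φ' 0 ≤ 0`.
  set φ : ℝ → ℝ := fun α => Ψ (y + α • (x - y)) + (α * (Ψ y - Ψ x + c) - α ^ 2 * c)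
  have hmax : IsMaxOn φ (Icc 0 1) 0 := by
    intro α hα
    have h := hsc α hα
    rw [show α • x + (1 - α) • y = y + α • (x - y) by module] at h
    have hφ0 : φ 0 = Ψ y := by simp [φ]
    show φ α ≤ φ 0
    rw [hφ0]
    simp only [φ, c]
    linarith
  have hφ : HasDerivAt φ (⟪Ψ', x - y⟫ + (Ψ y - Ψ x + c)) 0 := by
    have hpoly := ((hasDerivAt_id' (0:ℝ)).mul_const (Ψ y - Ψ x + c)).fun_sub
      ((hasDerivAt_pow 2 (0:ℝ)).mul_const c)
    refine ((hΨ.hasDerivAt_add_smul (x - y)).fun_add hpoly).congr_deriv ?_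
    simp
  have h := hmax.localize.hasFDerivWithinAt_nonpos hφ.hasFDerivAt.hasFDerivWithinAt
    (mem_posTangentConeAt_of_segment_subset (y := 1) (by simp [segment_eq_Icc]))
  simp only [ContinuousLinearMap.toSpanSingleton_apply, smul_eq_mul, one_mul] at h
  linarith

lemma inner_add_nonneg_of_isMinOn {C : Set E} (hC : Convex ℝ C) {Ψ : E → ℝ} {a w u Ψ' : E}
    (hΨ : HasGradientAt Ψ Ψ' w) (hw : w ∈ C) (hu : u ∈ C)
    (hmin : IsMinOn (fun v => ⟪a, v⟫ + Ψ v) C w) : 0 ≤ ⟪a + Ψ', u - w⟫ := by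
  have h := hmin.localize.hasFDerivWithinAt_nonneg
    (((innerSL ℝ a).hasFDerivAt).add hΨ.hasFDerivAt).hasFDerivWithinAt
    (sub_mem_posTangentConeAt_of_segment_subset (hC.segment_subset hw hu))
  simpa [inner_add_left] using h

end InnerProductSpace

section Bregman

variable {p : ℕ} {Ψ : EuclideanSpace ℝ (Fin p) → ℝ}
  {Ψ' : EuclideanSpace ℝ (Fin p) → EuclideanSpace ℝ (Fin p)}

lemma breg_sub_breg_sub_breg (x y z : EuclideanSpace ℝ (Fin p)) :
    breg Ψ Ψ' x y - breg Ψ Ψ' x z - breg Ψ Ψ' z y = ⟪Ψ' z - Ψ' y, x - z⟫ := by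
  simp only [breg, inner_sub_left, inner_sub_right]
  ring

lemma breg_nonneg_of_strongConvex {N : EuclideanSpace ℝ (Fin p) → ℝ} {σ : ℝ} (hσ : 0 ≤ σ)
    {x y : EuclideanSpace ℝ (Fin p)} (hΨ : HasGradientAt Ψ (Ψ' y) y)
    (hsc : ∀ α ∈ Icc (0:ℝ) 1, Ψ (α • x + (1 - α) • y) ≤
      α * Ψ x + (1 - α) * Ψ y - σ * α * (1 - α) / 2 * N (x - y) ^ 2) :
    0 ≤ breg Ψ Ψ' x y :=
  (by positivity : 0 ≤ σ / 2 * N (x - y) ^ 2).trans (half_mul_sq_le_of_strongConvex hΨ hsc)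

lemma inner_sub_le_of_mirror_step {C : Set (EuclideanSpace ℝ (Fin p))} (hC : Convex ℝ C)
    {N : EuclideanSpace ℝ (Fin p) → ℝ} (hN : IsNorm N) (hΨ : ∀ x, HasGradientAt Ψ (Ψ' x) x)
    {σ L G : ℝ} (hσ : 0 < σ) (hL : 0 < L) {g y w u : EuclideanSpace ℝ (Fin p)}
    (hw : w ∈ C) (hu : u ∈ C)
    (hsc : ∀ α ∈ Icc (0:ℝ) 1, Ψ (α • w + (1 - α) • y) ≤
      α * Ψ w + (1 - α) * Ψ y - σ * α * (1 - α) / 2 * N (w - y) ^ 2)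
    (hG : dualNorm N g ≤ G) (hmin : IsMinOn (fun v => ⟪(1 / L) • g - Ψ' y, v⟫ + Ψ v) C w) :
    ⟪g, y - u⟫ ≤ L * (breg Ψ Ψ' u y - breg Ψ Ψ' u w) + G ^ 2 / (2 * σ * L) := by
  set n := N (w - y)
  have hopt : ⟪g, w - u⟫ ≤ L * ⟪Ψ' w - Ψ' y, u - w⟫ := by
    have h := inner_add_nonneg_of_isMinOn hC (hΨ w) hw hu hmin
    have e : L * ⟪(1 / L) • g - Ψ' y + Ψ' w, u - w⟫ =
        L * ⟪Ψ' w - Ψ' y, u - w⟫ - ⟪g, w - u⟫ := by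
      rw [← neg_sub u w, inner_neg_right]
      simp only [inner_add_left, inner_sub_left, real_inner_smul_left]
      field_simp
      ring
    linarith [mul_nonneg hL.le h]
  have hstrong : L * (σ / 2 * n ^ 2) ≤ L * breg Ψ Ψ' w y :=
    mul_le_mul_of_nonneg_left (half_mul_sq_le_of_strongConvex (hΨ y) hsc) hL.le
  have hdual : ⟪g, y - w⟫ ≤ G * n := by
    calc ⟪g, y - w⟫ ≤ dualNorm N g * N (y - w) := hN.inner_le_dualNorm_mul g _
      _ ≤ G * n := by rw [hN.map_sub_comm]; exact mul_le_mul_of_nonneg_right hG (hN.nonneg _)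
  have hamgm : G * n ≤ G ^ 2 / (2 * σ * L) + L * (σ / 2 * n ^ 2) := by
    have e : G ^ 2 / (2 * σ * L) + L * (σ / 2 * n ^ 2) - G * n =
        (G - σ * L * n) ^ 2 / (2 * σ * L) := by
      field_simp
      ring
    have : 0 ≤ (G - σ * L * n) ^ 2 / (2 * σ * L) := by positivity
    linarith
  have hthree := breg_sub_breg_sub_breg (Ψ := Ψ) (Ψ' := Ψ') u y w
  have hsplit : ⟪g, y - u⟫ = ⟪g, y - w⟫ + ⟪g, w - u⟫ := by
    rw [← inner_add_right, sub_add_sub_cancel]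
  rw [← hthree] at hopt
  rw [hsplit]
  linarith

end Bregman

lemma sum_Ico_le_of_le_sub_succ_add {a f c : ℕ → ℝ} {m n : ℕ} (hmn : m ≤ n)
    (h : ∀ t ∈ Finset.Ico m n, a t ≤ f t - f (t + 1) + c t) (hf : 0 ≤ f n) :
    ∑ t ∈ Finset.Ico m n, a t ≤ f m + ∑ t ∈ Finset.Ico m n, c t := by
  have htelescope := Finset.sum_Ico_sub f hmn
  calc ∑ t ∈ Finset.Ico m n, a t ≤ ∑ t ∈ Finset.Ico m n, (f t - f (t + 1) + c t) :=
        Finset.sum_le_sum h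
    _ = f m - f n + ∑ t ∈ Finset.Ico m n, c t := by
        rw [Finset.sum_add_distrib, ← neg_sub, ← htelescope, ← Finset.sum_neg_distrib]
        simp only [neg_sub]
    _ ≤ f m + ∑ t ∈ Finset.Ico m n, c t := by linarith

theorem mirror_descent_telescoped_strongly_convex_general {p : ℕ}
    (C : Set (EuclideanSpace ℝ (Fin p))) (hC : Convex ℝ C)
    (N : EuclideanSpace ℝ (Fin p) → ℝ) (hN : IsNorm N)
    (Ψ : EuclideanSpace ℝ (Fin p) → ℝ)
    (Ψ' : EuclideanSpace ℝ (Fin p) → EuclideanSpace ℝ (Fin p))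
    (hΨdiff : ∀ x, HasGradientAt Ψ (Ψ' x) x)
    (hΨsc : ∀ x ∈ C, ∀ y ∈ C, ∀ α ∈ Set.Icc (0:ℝ) 1,
      Ψ (α • x + (1 - α) • y) ≤
        α * Ψ x + (1 - α) * Ψ y - 1 * α * (1 - α) / 2 * (N (x - y)) ^ 2)
    (Δ : ℝ) (hΔ : 0 < Δ) (T : ℕ)
    (G : ℝ) (g θ : ℕ → EuclideanSpace ℝ (Fin p))
    (hG : ∀ t ∈ Finset.Icc 1 T, dualNorm N (g t) ≤ G)
    (hθ1 : θ 1 ∈ C)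
    (hstep : ∀ t ∈ Finset.Icc 1 T, θ (t + 1) ∈ C ∧
      ∀ u ∈ C,
        ⟪(1 / (Δ * ((t : ℝ) + 1))) • g t - Ψ' (θ t), θ (t + 1)⟫ + Ψ (θ (t + 1)) ≤
          ⟪(1 / (Δ * ((t : ℝ) + 1))) • g t - Ψ' (θ t), u⟫ + Ψ u)
    (θs : EuclideanSpace ℝ (Fin p)) (hθs : θs ∈ C) :
    ∑ t ∈ Finset.Icc 1 T, (⟪g t, θ t - θs⟫ - Δ * breg Ψ Ψ' θs (θ t)) ≤
      Δ * breg Ψ Ψ' θs (θ 1) +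
        G ^ 2 / (2 * Δ) * ∑ t ∈ Finset.Icc 1 T, 1 / ((t : ℝ) + 1) := by
  have hθC : ∀ t ∈ Finset.Ico 1 (T + 2), θ t ∈ C := by
    rintro (_ | _ | t) ht
    · simp at ht
    · exact hθ1
    · exact (hstep (t + 1) (by simp only [Finset.mem_Ico, Finset.mem_Icc] at ht ⊢; omega)).1
  have hdecrease : ∀ t ∈ Finset.Icc 1 T, ⟪g t, θ t - θs⟫ - Δ * breg Ψ Ψ' θs (θ t) ≤
      Δ * t * breg Ψ Ψ' θs (θ t) - Δ * ↑(t + 1) * breg Ψ Ψ' θs (θ (t + 1)) +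
        G ^ 2 / (2 * Δ) * (1 / ((t : ℝ) + 1)) := by
    intro t ht
    have h := inner_sub_le_of_mirror_step hC hN hΨdiff one_pos
      (by positivity : 0 < Δ * ((t : ℝ) + 1)) (hstep t ht).1 hθs
      (hΨsc _ (hstep t ht).1 _ (hθC t (Finset.Ico_subset_Ico_right (by omega) ht)))
      (hG t ht) (isMinOn_iff.2 (hstep t ht).2)
    have e : G ^ 2 / (2 * 1 * (Δ * ((t : ℝ) + 1))) = G ^ 2 / (2 * Δ) * (1 / ((t : ℝ) + 1)) := by
      field_simp
    push_cast
    linarith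
  have hlast : 0 ≤ Δ * ↑(T + 1) * breg Ψ Ψ' θs (θ (T + 1)) :=
    mul_nonneg (by positivity) (breg_nonneg_of_strongConvex zero_le_one (hΨdiff _)
      (hΨsc _ hθs _ (hθC (T + 1) (by simp))))
  calc _ ≤ Δ * ((1 : ℕ) : ℝ) * breg Ψ Ψ' θs (θ 1) +
        ∑ t ∈ Finset.Icc 1 T, G ^ 2 / (2 * Δ) * (1 / ((t : ℝ) + 1)) :=
      sum_Ico_le_of_le_sub_succ_add (Nat.le_add_left 1 T) hdecrease hlast
    _ = _ := by rw [← Finset.mul_sum, Nat.cast_one, mul_one]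

/-- Telescoped mirror descent bound with decreasing step sizes `η_{t+1} = 1/(Δ(t+1))`
for the strongly convex analysis. -/
theorem mirror_descent_telescoped_strongly_convex {p : ℕ}
    (C : Set (EuclideanSpace ℝ (Fin p))) (hC : Convex ℝ C)
    (N : EuclideanSpace ℝ (Fin p) → ℝ) (hN : IsNorm N)
    (Ψ : EuclideanSpace ℝ (Fin p) → ℝ)
    (Ψ' : EuclideanSpace ℝ (Fin p) → EuclideanSpace ℝ (Fin p))
    (hΨdiff : ∀ x, HasGradientAt Ψ (Ψ' x) x)
    (hΨsc : ∀ x ∈ C, ∀ y ∈ C, ∀ α ∈ Set.Icc (0:ℝ) 1,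
      Ψ (α • x + (1 - α) • y) ≤
        α * Ψ x + (1 - α) * Ψ y - 1 * α * (1 - α) / 2 * (N (x - y)) ^ 2)
    (Δ : ℝ) (hΔ : 0 < Δ) (T : ℕ) (hT : 1 ≤ T)
    (G : ℝ) (g θ : ℕ → EuclideanSpace ℝ (Fin p))
    (hG : ∀ t ∈ Finset.Icc 1 T, dualNorm N (g t) ≤ G)
    (hθ1 : θ 1 ∈ C)
    (hstep : ∀ t ∈ Finset.Icc 1 T, θ (t + 1) ∈ C ∧
      ∀ u ∈ C,
        ⟪(1 / (Δ * ((t : ℝ) + 1))) • g t - Ψ' (θ t), θ (t + 1)⟫ + Ψ (θ (t + 1)) ≤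
          ⟪(1 / (Δ * ((t : ℝ) + 1))) • g t - Ψ' (θ t), u⟫ + Ψ u)
    (θs : EuclideanSpace ℝ (Fin p)) (hθs : θs ∈ C) :
    ∑ t ∈ Finset.Icc 1 T, (⟪g t, θ t - θs⟫ - Δ * breg Ψ Ψ' θs (θ t)) ≤
      Δ * breg Ψ Ψ' θs (θ 1) +
        G ^ 2 / (2 * Δ) * ∑ t ∈ Finset.Icc 1 T, 1 / ((t : ℝ) + 1) :=
  mirror_descent_telescoped_strongly_convex_general C hC N hN Ψ Ψ' hΨdiff hΨsc Δ hΔ T G g θ hG hθ1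
    hstep θs hθs
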